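/- Let I ⊆ L be finite, let ι : I → J be a bijection onto a subset J ⊆ L with I ∩ J = ∅, let (p_M)_{M ∈ D_I} be a probability distribution, and set Φ = Σ_{M ∈ D_I} p_M^{1/2} f_{M ι(M)} ∈ H and ρ_{ι(I)} = Σ_{M ∈ D_I} p_M |f_{ι(M)}⟩⟨f_{ι(M)}|. Then ⟨Φ, bΦ⟩ = Tr(ρ_{ι(I)} b) for all b ∈ A(ι(I)); that is, the pure state given by the vector Φ reduces to the state ρ_{ι(I)} on A(ι(I)). -/

import Mathlib

/-
Write `f_{M ι(M)} = a*_{m_1} ⋯ a*_{m_k} f_{ι(M)}`. An element `b ∈ A(ι(I))` moves past a creation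
operator `a*_m` with `m ∉ ι(I)` at the price of a parity twist: `b a*_m = a*_m θ(b)`, where
`θ(b) = (-1)^N b (-1)^N` lies again in `A(ι(I))`. The algebra `A(ι(I))` preserves the vectors with
no particle outside `ι(I)`; on them the products `a*_{m_1} ⋯ a*_{m_k}` with modes in `I` are
isometric, and products over different sets of modes have orthogonal ranges. Hence
`⟨f_{M ι(M)}, b f_{N ι(N)}⟩ = δ_{MN} ⟨f_{ι(M)}, θ^{|M|}(b) f_{ι(M)}⟩`
`= δ_{MN} ⟨f_{ι(M)}, b f_{ι(M)}⟩`, the last step because `f_{ι(M)}` is a parity eigenvector.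
So the cross terms of `⟨Φ, bΦ⟩` vanish and the diagonal ones are those of `Tr(ρ_{ι(I)} b)`.
-/

noncomputable section
open scoped InnerProductSpace ComplexConjugate
open ContinuousLinearMap

namespace Fermion

variable (L : Type) [Fintype L] [LinearOrder L]

/-- The fermionic Fock space over the one-particle space `h = ℓ²(L)`, realized concretely
via its orthonormal basis indexed by the finite subsets of `L` (the vectors `f_M`). -/
abbrev FockSpace := EuclideanSpace ℂ (Finset L)

variable {L}

/-- The vacuum vector `Ψ = f_∅`. -/
def vac : FockSpace L := EuclideanSpace.single ∅ 1

/-- Jordan–Wigner sign factor. -/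
def jwSign (l : L) (S : Finset L) : ℂ := (-1 : ℂ) ^ (S.filter (fun k => k < l)).card

/-- The creation operator `a*_l = a*(e_l)`. -/
def cre (l : L) : FockSpace L →L[ℂ] FockSpace L :=
  LinearMap.toContinuousLinearMap <|
    (EuclideanSpace.basisFun (Finset L) ℂ).toBasis.constr ℂ fun S =>
      if l ∈ S then 0 else jwSign l S • EuclideanSpace.single (insert l S) 1

/-- The annihilation operator `a_l = a(e_l)`. -/
def ann (l : L) : FockSpace L →L[ℂ] FockSpace L := ContinuousLinearMap.adjoint (cre l)

/-- The vector `f_{(l_1,…,l_n)} = a*_{l_1} ⋯ a*_{l_n} Ψ  (= P (e_{l_1} ⊗ ⋯ ⊗ e_{l_n}))`. -/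
def fvec (M : List L) : FockSpace L := M.foldr (fun l v => cre l v) vac

/-- The algebra `A(I)` : the unital *-subalgebra of `B(H)` generated by `{a_l : l ∈ I}`. -/
def A (I : Finset L) : StarSubalgebra ℂ (FockSpace L →L[ℂ] FockSpace L) :=
  StarAlgebra.adjoin ℂ (ann '' (I : Set L))

/-- The trace on `B(H)`. -/
def Tr (T : FockSpace L →L[ℂ] FockSpace L) : ℂ := LinearMap.trace ℂ (FockSpace L) T

/-- The rank-one operator `|x⟩⟨y|`. -/
def ketbra (x y : FockSpace L) : FockSpace L →L[ℂ] FockSpace L :=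
  (ContinuousLinearMap.toSpanSingleton ℂ x).comp (innerSL ℂ y)

/-- A valid choice of `D_I`: `D S` enumerates the finite set `S` without repetitions. -/
def IsEnum (D : Finset L → List L) : Prop := ∀ S : Finset L, (D S).Nodup ∧ (D S).toFinset = S

/-- The entangled vector `Φ = Σ_{M ∈ D_I} p_M^{1/2} f_{M ι(M)}`. -/
def Phi (D : Finset L → List L) (p : Finset L → ℝ) (I : Finset L) (ι : L → L) : FockSpace L :=
  ∑ S ∈ I.powerset, (Real.sqrt (p S) : ℂ) • fvec (D S ++ (D S).map ι)

/-- The state `φ(x) = ⟨Φ, xΦ⟩`. -/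
def phi (D : Finset L → List L) (p : Finset L → ℝ) (I : Finset L) (ι : L → L)
    (x : FockSpace L →L[ℂ] FockSpace L) : ℂ :=
  ⟪Phi D p I ι, x (Phi D p I ι)⟫_ℂ

set_option linter.unusedSectionVars false

/-- The basis vector indexed by `S`; it is `f_M` for `M` the increasing enumeration of `S`. -/
def ket (S : Finset L) : FockSpace L := EuclideanSpace.single S 1

@[simp] lemma ket_apply (S T : Finset L) : ket S T = if T = S then 1 else 0 :=
  PiLp.single_apply 2 ℂ S 1 T

@[simp] lemma inner_ket_left (S : Finset L) (v : FockSpace L) : ⟪ket S, v⟫_ℂ = v S := by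
  simp [ket, EuclideanSpace.inner_single_left]

lemma sum_smul_ket (v : FockSpace L) : ∑ S, v S • ket S = v := by
  simpa [ket, EuclideanSpace.basisFun_apply] using (EuclideanSpace.basisFun (Finset L) ℂ).sum_repr v

lemma ext_ket {A B : FockSpace L →L[ℂ] FockSpace L} (h : ∀ S, A (ket S) = B (ket S)) :
    A = B :=
  ContinuousLinearMap.ext fun v => by
    rw [← sum_smul_ket v]
    simp only [map_sum, map_smul, h]

@[simp] lemma conj_jwSign (l : L) (S : Finset L) : conj (jwSign l S) = jwSign l S := by
  simp [jwSign]

@[simp] lemma norm_jwSign (l : L) (S : Finset L) : ‖jwSign l S‖ = 1 := by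
  simp [jwSign]

lemma jwSign_insert {k l : L} {S : Finset L} (hl : l ∉ S) :
    jwSign k (insert l S) = (if l < k then -1 else 1) * jwSign k S := by
  unfold jwSign
  rw [Finset.filter_insert]
  split_ifs with h
  · rw [Finset.card_insert_of_notMem (by simp [hl]), pow_succ, mul_comm]
  · rw [one_mul]

lemma cre_ket (l : L) (S : Finset L) :
    cre l (ket S) = if l ∈ S then 0 else jwSign l S • ket (insert l S) := by
  have h := (EuclideanSpace.basisFun (Finset L) ℂ).toBasis.constr_basis ℂ
    (fun S => if l ∈ S then 0 else jwSign l S • EuclideanSpace.single (insert l S) (1 : ℂ)) S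
  rw [OrthonormalBasis.coe_toBasis, EuclideanSpace.basisFun_apply] at h
  exact h

lemma ann_apply (l : L) (v : FockSpace L) (T : Finset L) :
    ann l v T = if l ∈ T then 0 else jwSign l T * v (insert l T) := by
  rw [← inner_ket_left, ann, adjoint_inner_right, cre_ket]
  split_ifs <;> simp [inner_smul_left]

lemma ann_ket_of_notMem {l : L} {S : Finset L} (hl : l ∉ S) : ann l (ket S) = 0 := by
  ext T
  rw [ann_apply]
  split_ifs with hT
  · rfl
  · simp [ne_of_mem_of_not_mem' (Finset.mem_insert_self l T) hl]

lemma ann_ket_insert {l : L} {S : Finset L} (hl : l ∉ S) :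
    ann l (ket (insert l S)) = jwSign l S • ket S := by
  ext T
  rw [ann_apply]
  split_ifs with hT
  · simp [ne_of_mem_of_not_mem' hT hl]
  · have : insert l T = insert l S ↔ T = S :=
      ⟨fun h => by rw [← Finset.erase_insert hT, h, Finset.erase_insert hl], congrArg _⟩
    by_cases hTS : T = S <;> simp [this, hTS]

lemma cre_mul_cre {l m : L} (hlm : l ≠ m) : cre l * cre m = -(cre m * cre l) := by
  refine ext_ket fun T => ?_
  simp only [mul_apply_eq_comp, neg_apply]
  by_cases hm : m ∈ T
  · by_cases hl : l ∈ T <;> simp [cre_ket, hl, hm]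
  by_cases hl : l ∈ T
  · simp [cre_ket, hl, hm]
  simp only [cre_ket, hl, hm, if_false, map_smul, Finset.mem_insert, hlm, hlm.symm, or_self,
    smul_smul, Finset.insert_comm l m, jwSign_insert hl, jwSign_insert hm]
  rw [← neg_smul]
  congr 1
  rcases hlm.lt_or_gt with h | h <;> simp [h, h.not_gt, mul_comm]

lemma ann_mul_cre {l m : L} (hlm : l ≠ m) : ann l * cre m = -(cre m * ann l) := by
  refine ext_ket fun T => ?_
  simp only [mul_apply_eq_comp, neg_apply]
  by_cases hl : l ∈ T
  swap
  · by_cases hm : m ∈ T <;> simp [cre_ket, ann_ket_of_notMem, hl, hm, hlm]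
  obtain ⟨T, hlT, rfl⟩ : ∃ T', l ∉ T' ∧ T = insert l T' :=
    ⟨T.erase l, Finset.notMem_erase l T, (Finset.insert_erase hl).symm⟩
  by_cases hm : m ∈ T
  · simp [cre_ket, ann_ket_insert hlT, hm]
  simp only [cre_ket, ann_ket_insert hlT, Finset.mem_insert, hlm.symm, hm, or_self, if_false,
    map_smul, Finset.insert_comm m l,
    ann_ket_insert (l := l) (S := insert m T) (by simp [hlm, hlT]),
    smul_smul, jwSign_insert hlT, jwSign_insert hm]
  rw [← neg_smul]
  congr 1
  rcases hlm.lt_or_gt with h | h <;> simp [h, h.not_gt, mul_comm]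

lemma star_cre (l : L) : star (cre l) = ann l := rfl

lemma star_ann (l : L) : star (ann l) = cre l := by
  rw [← star_cre, star_star]

lemma ann_mul_ann {l m : L} (hlm : l ≠ m) : ann l * ann m = -(ann m * ann l) := by
  have h := congrArg star (cre_mul_cre hlm.symm)
  -- `star_neg` does not fire on this operator space (instance mismatch); go through `adjoint`.
  rwa [star_mul, star_eq_adjoint (-_), map_neg, ← star_eq_adjoint, star_mul, star_cre,
    star_cre] at h

/-- The parity operator `(-1)^N`, `N` the number operator. -/
def parity : FockSpace L →L[ℂ] FockSpace L :=
  ∑ S, ((-1 : ℂ) ^ S.card) • ketbra (ket S) (ket S)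

lemma parity_ket (S : Finset L) : parity (ket S) = (-1 : ℂ) ^ S.card • ket S := by
  simp [parity, ketbra, ite_smul]

lemma star_parity : star (parity : FockSpace L →L[ℂ] FockSpace L) = parity := by
  rw [parity, star_eq_adjoint, map_sum]
  refine Finset.sum_congr rfl fun S _ => ?_
  rw [LinearIsometryEquiv.map_smulₛₗ, ketbra, ← InnerProductSpace.rankOne_def',
    InnerProductSpace.adjoint_rankOne]
  simp

lemma parity_mul_parity : (parity : FockSpace L →L[ℂ] FockSpace L) * parity = 1 :=
  ext_ket fun S => by simp [parity_ket, smul_smul, ← pow_add, ← two_mul, pow_mul]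

def twist (x : FockSpace L →L[ℂ] FockSpace L) : FockSpace L →L[ℂ] FockSpace L :=
  parity * x * parity

lemma twist_add (x y : FockSpace L →L[ℂ] FockSpace L) : twist (x + y) = twist x + twist y := by
  simp only [twist, mul_add, add_mul]

lemma twist_mul (x y : FockSpace L →L[ℂ] FockSpace L) : twist (x * y) = twist x * twist y := by
  simp only [twist, mul_assoc]
  rw [← mul_assoc parity parity, parity_mul_parity, one_mul]

lemma twist_star (x : FockSpace L →L[ℂ] FockSpace L) : twist (star x) = star (twist x) := by
  simp only [twist, star_mul, star_parity, mul_assoc]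

lemma twist_algebraMap (r : ℂ) :
    twist (algebraMap ℂ (FockSpace L →L[ℂ] FockSpace L) r) = algebraMap ℂ _ r := by
  rw [twist, ← Algebra.commutes, mul_assoc, parity_mul_parity, mul_one]

lemma twist_cre (l : L) : twist (cre l) = -cre l := by
  refine ext_ket fun T => ?_
  simp only [twist, mul_apply_eq_comp, neg_apply, parity_ket, map_smul, cre_ket]
  split_ifs with hl
  · simp
  · rw [map_smul, parity_ket, Finset.card_insert_of_notMem hl, smul_smul, smul_smul,
      ← neg_one_smul ℂ (jwSign l T • ket _), smul_smul]
    congr 1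
    ring_nf
    simp [pow_mul']

lemma twist_ann (l : L) : twist (ann l) = -ann l := by
  rw [← star_cre, twist_star, twist_cre, star_eq_adjoint, map_neg, ← star_eq_adjoint]

lemma twist_mem_A {J : Finset L} {x : FockSpace L →L[ℂ] FockSpace L} (hx : x ∈ A J) :
    twist x ∈ A J := by
  induction hx using StarAlgebra.adjoin_induction with
  | mem x hx =>
    obtain ⟨l, hl, rfl⟩ := hx
    rw [twist_ann]
    exact neg_mem (StarAlgebra.subset_adjoin ℂ _ ⟨l, hl, rfl⟩)
  | algebraMap r => rw [twist_algebraMap]; exact algebraMap_mem _ r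
  | add x y _ _ hx hy => rw [twist_add]; exact add_mem hx hy
  | mul x y _ _ hx hy => rw [twist_mul]; exact mul_mem hx hy
  | star x _ hx => rw [twist_star]; exact star_mem hx

lemma twisted_commute_cre_of_mem_A {J : Finset L} {m : L} (hm : m ∉ J)
    {x : FockSpace L →L[ℂ] FockSpace L} (hx : x ∈ A J) :
    x * cre m = cre m * twist x ∧ ann m * x = twist x * ann m := by
  induction hx using StarAlgebra.adjoin_induction with
  | mem x hx =>
    obtain ⟨l, hl, rfl⟩ := hx
    have hlm : l ≠ m := ne_of_mem_of_not_mem hl hm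
    rw [twist_ann, ann_mul_cre hlm, ann_mul_ann hlm.symm]
    exact ⟨(mul_neg (cre m) (ann l)).symm, (neg_mul (ann l) (ann m)).symm⟩
  | algebraMap r => rw [twist_algebraMap]; exact ⟨Algebra.commutes r _, (Algebra.commutes r _).symm⟩
  | add x y _ _ hx hy => simp only [twist_add, add_mul, mul_add, hx.1, hx.2, hy.1, hy.2, and_self]
  | mul x y _ _ hx hy =>
    simp only [twist_mul]
    constructor
    · rw [mul_assoc, hy.1, ← mul_assoc, hx.1, mul_assoc]
    · rw [← mul_assoc, hx.2, mul_assoc, hy.2, mul_assoc]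
  | star x _ hx =>
    rw [twist_star]
    constructor
    · simpa only [star_mul, star_ann] using congrArg star hx.2
    · simpa only [star_mul, star_cre] using congrArg star hx.1

def creProd (M : List L) : FockSpace L →L[ℂ] FockSpace L := (M.map cre).prod

lemma creProd_apply (M : List L) (v : FockSpace L) :
    creProd M v = M.foldr (fun l w => cre l w) v := by
  induction M with
  | nil => rfl
  | cons m M ih => simp [creProd, ← ih]

lemma fvec_append (M N : List L) : fvec (M ++ N) = creProd M (fvec N) := by
  rw [fvec, List.foldr_append, creProd_apply]
  rfl

lemma creProd_ket {M : List L} (hM : M.Nodup) {T : Finset L} (hMT : Disjoint M.toFinset T) :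
    ∃ s : ℂ, ‖s‖ = 1 ∧ creProd M (ket T) = s • ket (M.toFinset ∪ T) := by
  induction M with
  | nil => exact ⟨1, by simp, by simp [creProd]⟩
  | cons m M ih =>
    rw [List.nodup_cons] at hM
    rw [List.toFinset_cons, Finset.disjoint_insert_left] at hMT
    obtain ⟨s, hs, h⟩ := ih hM.2 hMT.2
    have hm : m ∉ M.toFinset ∪ T := by simp [hM.1, hMT.1]
    refine ⟨s * jwSign m (M.toFinset ∪ T), by simp [hs], ?_⟩
    rw [creProd, List.map_cons, List.prod_cons, mul_apply_eq_comp, ← creProd, h, map_smul,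
      cre_ket, if_neg hm, smul_smul, List.toFinset_cons, Finset.insert_union]

lemma fvec_eq_smul_ket {M : List L} (hM : M.Nodup) : ∃ s : ℂ, fvec M = s • ket M.toFinset := by
  have h : fvec M = creProd M (ket ∅) := by rw [creProd_apply]; rfl
  obtain ⟨s, -, hs⟩ := creProd_ket hM (Finset.disjoint_empty_right _)
  exact ⟨s, by rw [h, hs, Finset.union_empty]⟩

lemma ann_fvec_of_notMem {N : List L} (hN : N.Nodup) {m : L} (hm : m ∉ N) : ann m (fvec N) = 0 := by
  obtain ⟨s, hs⟩ := fvec_eq_smul_ket hN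
  rw [hs, map_smul, ann_ket_of_notMem (mt List.mem_toFinset.mp hm), smul_zero]

lemma parity_fvec {N : List L} (hN : N.Nodup) :
    parity (fvec N) = (-1 : ℂ) ^ N.toFinset.card • fvec N := by
  obtain ⟨s, hs⟩ := fvec_eq_smul_ket hN
  rw [hs, map_smul, parity_ket, smul_comm]

lemma mul_creProd_of_mem_A {J : Finset L} {M : List L} (hMJ : Disjoint M.toFinset J)
    {x : FockSpace L →L[ℂ] FockSpace L} (hx : x ∈ A J) :
    x * creProd M = creProd M * twist^[M.length] x := by
  induction M generalizing x with
  | nil => simp [creProd]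
  | cons m M ih =>
    rw [List.toFinset_cons, Finset.disjoint_insert_left] at hMJ
    simp only [creProd, List.map_cons, List.prod_cons, List.length_cons,
      Function.iterate_succ_apply] at ih ⊢
    rw [← mul_assoc, (twisted_commute_cre_of_mem_A hMJ.1 hx).1, mul_assoc,
      ih hMJ.2 (twist_mem_A hx), mul_assoc]

lemma apply_eq_zero_of_ann_eq_zero {J : Finset L} {v : FockSpace L}
    (hv : ∀ m ∉ J, ann m v = 0) {U : Finset L} (hU : ¬ U ⊆ J) : v U = 0 := by
  obtain ⟨m, hmU, hmJ⟩ := Finset.not_subset.mp hU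
  simpa [ann_apply, Finset.insert_erase hmU, jwSign] using congrArg (· (U.erase m)) (hv m hmJ)

lemma inner_apply_apply_eq_of_ket {J : Finset L} {A B : FockSpace L →L[ℂ] FockSpace L} {c : ℂ}
    (h : ∀ U ⊆ J, ∀ V ⊆ J, ⟪A (ket U), B (ket V)⟫_ℂ = c * ⟪ket U, ket V⟫_ℂ)
    {u w : FockSpace L} (hu : ∀ m ∉ J, ann m u = 0) (hw : ∀ m ∉ J, ann m w = 0) :
    ⟪A u, B w⟫_ℂ = c * ⟪u, w⟫_ℂ := by
  have key : ∀ U V, w V * (conj (u U) * ⟪A (ket U), B (ket V)⟫_ℂ)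
      = c * (w V * (conj (u U) * ⟪ket U, ket V⟫_ℂ)) := by
    intro U V
    by_cases hU : U ⊆ J
    · by_cases hV : V ⊆ J
      · rw [h U hU V hV]; ring
      · simp [apply_eq_zero_of_ann_eq_zero hw hV]
    · simp [apply_eq_zero_of_ann_eq_zero hu hU]
  rw [← sum_smul_ket u, ← sum_smul_ket w]
  simp only [map_sum, map_smul, sum_inner, inner_sum, inner_smul_left, inner_smul_right,
    Finset.mul_sum]
  exact Finset.sum_congr rfl fun V _ => Finset.sum_congr rfl fun U _ => key U V

lemma inner_creProd_creProd_of_toFinset_ne {J : Finset L} {M N : List L} (hM : M.Nodup)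
    (hN : N.Nodup) (hMJ : Disjoint M.toFinset J) (hNJ : Disjoint N.toFinset J)
    (hMN : M.toFinset ≠ N.toFinset) {u w : FockSpace L} (hu : ∀ m ∉ J, ann m u = 0)
    (hw : ∀ m ∉ J, ann m w = 0) :
    ⟪creProd M u, creProd N w⟫_ℂ = 0 := by
  refine (inner_apply_apply_eq_of_ket (fun U hU V hV => ?_) hu hw).trans (zero_mul _)
  obtain ⟨s, -, hs⟩ := creProd_ket hM (hMJ.mono_right hU)
  obtain ⟨t, -, ht⟩ := creProd_ket hN (hNJ.mono_right hV)
  have sdiff_J : ∀ X W, Disjoint X J → W ⊆ J → (X ∪ W) \ J = X := fun X W hX hW => by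
    rw [Finset.union_sdiff_distrib, Finset.sdiff_eq_empty_iff_subset.mpr hW, Finset.union_empty,
      Finset.sdiff_eq_self_of_disjoint hX]
  have hne : M.toFinset ∪ U ≠ N.toFinset ∪ V := fun h =>
    hMN (by rw [← sdiff_J _ _ hMJ hU, h, sdiff_J _ _ hNJ hV])
  simp [hs, ht, hne]

lemma inner_creProd_creProd {J : Finset L} {M : List L} (hM : M.Nodup)
    (hMJ : Disjoint M.toFinset J) {u w : FockSpace L} (hu : ∀ m ∉ J, ann m u = 0)
    (hw : ∀ m ∉ J, ann m w = 0) :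
    ⟪creProd M u, creProd M w⟫_ℂ = ⟪u, w⟫_ℂ := by
  refine (inner_apply_apply_eq_of_ket (fun U hU V hV => ?_) hu hw).trans (one_mul _)
  rw [one_mul]
  obtain ⟨s, hs1, hs⟩ := creProd_ket hM (hMJ.mono_right hU)
  by_cases hUV : U = V
  · subst hUV
    rw [hs]
    simp [norm_smul, hs1, ket]
  obtain ⟨t, -, ht⟩ := creProd_ket hM (hMJ.mono_right hV)
  have hne : M.toFinset ∪ U ≠ M.toFinset ∪ V := fun h => hUV <| by
    rw [← Finset.union_sdiff_cancel_left (hMJ.mono_right hU), h,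
      Finset.union_sdiff_cancel_left (hMJ.mono_right hV)]
  simp [hs, ht, hne, hUV]

lemma iterate_twist_mem_A {J : Finset L} {x : FockSpace L →L[ℂ] FockSpace L} (hx : x ∈ A J)
    (n : ℕ) : twist^[n] x ∈ A J := by
  induction n generalizing x with
  | zero => exact hx
  | succ n ih => exact ih (twist_mem_A hx)

lemma ann_apply_eq_zero_of_mem_A {J : Finset L} {x : FockSpace L →L[ℂ] FockSpace L}
    (hx : x ∈ A J) {v : FockSpace L} (hv : ∀ m ∉ J, ann m v = 0) :
    ∀ m ∉ J, ann m (x v) = 0 := fun m hm => by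
  rw [← mul_apply_eq_comp, (twisted_commute_cre_of_mem_A hm hx).2, mul_apply_eq_comp, hv m hm,
    map_zero]

lemma inner_iterate_twist_apply {u : FockSpace L} {k : ℕ} (hu : parity u = (-1 : ℂ) ^ k • u)
    (n : ℕ) (x : FockSpace L →L[ℂ] FockSpace L) : ⟪u, (twist^[n] x) u⟫_ℂ = ⟪u, x u⟫_ℂ := by
  induction n generalizing x with
  | zero => rfl
  | succ n ih =>
    rw [Function.iterate_succ_apply, ih, twist, mul_apply_eq_comp, mul_apply_eq_comp, hu,
      ← adjoint_inner_left, ← star_eq_adjoint, star_parity, hu]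
    simp [inner_smul_left, inner_smul_right, ← mul_assoc, ← pow_add, ← two_mul, pow_mul]

lemma inner_fvec_append_apply_fvec_append_of_toFinset_ne {J : Finset L}
    {b : FockSpace L →L[ℂ] FockSpace L} (hb : b ∈ A J) {M N M' N' : List L} (hM : M.Nodup)
    (hN : N.Nodup) (hMJ : Disjoint M.toFinset J) (hNJ : Disjoint N.toFinset J) (hM' : M'.Nodup)
    (hN' : N'.Nodup) (hM'J : ∀ m ∈ M', m ∈ J) (hN'J : ∀ m ∈ N', m ∈ J)
    (hMN : M.toFinset ≠ N.toFinset) :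
    ⟪fvec (M ++ M'), b (fvec (N ++ N'))⟫_ℂ = 0 := by
  rw [fvec_append, fvec_append, ← mul_apply_eq_comp b, mul_creProd_of_mem_A hNJ hb,
    mul_apply_eq_comp]
  have hvac : ∀ m ∉ J, ann m (fvec N') = 0 := fun m hm => ann_fvec_of_notMem hN' (mt (hN'J m) hm)
  exact inner_creProd_creProd_of_toFinset_ne hM hN hMJ hNJ hMN
    (fun m hm => ann_fvec_of_notMem hM' (mt (hM'J m) hm))
    (ann_apply_eq_zero_of_mem_A (iterate_twist_mem_A hb _) hvac)

lemma inner_fvec_append_apply_fvec_append {J : Finset L} {b : FockSpace L →L[ℂ] FockSpace L}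
    (hb : b ∈ A J) {M N : List L} (hM : M.Nodup) (hMJ : Disjoint M.toFinset J) (hN : N.Nodup)
    (hNJ : ∀ m ∈ N, m ∈ J) :
    ⟪fvec (M ++ N), b (fvec (M ++ N))⟫_ℂ = ⟪fvec N, b (fvec N)⟫_ℂ := by
  have hvac : ∀ m ∉ J, ann m (fvec N) = 0 := fun m hm => ann_fvec_of_notMem hN (mt (hNJ m) hm)
  rw [fvec_append, ← mul_apply_eq_comp b, mul_creProd_of_mem_A hMJ hb, mul_apply_eq_comp,
    inner_creProd_creProd hM hMJ hvac (ann_apply_eq_zero_of_mem_A (iterate_twist_mem_A hb _) hvac),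
    inner_iterate_twist_apply (parity_fvec hN)]

lemma inner_sum_smul_apply_sum_smul {𝕜 E ι : Type*} [RCLike 𝕜] [NormedAddCommGroup E]
    [InnerProductSpace 𝕜 E] (s : Finset ι) (c : ι → 𝕜) (v : ι → E) (b : E →L[𝕜] E)
    (horth : ∀ i ∈ s, ∀ j ∈ s, i ≠ j → ⟪v i, b (v j)⟫_𝕜 = 0) :
    ⟪∑ i ∈ s, c i • v i, b (∑ j ∈ s, c j • v j)⟫_𝕜
      = ∑ i ∈ s, conj (c i) * c i * ⟪v i, b (v i)⟫_𝕜 := by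
  simp only [map_sum, map_smul, sum_inner, inner_sum, inner_smul_left, inner_smul_right]
  refine Finset.sum_congr rfl fun i hi => ?_
  rw [Finset.sum_eq_single i (fun j hj hji => by rw [horth j hj i hi hji, mul_zero])
    (fun h => absurd hi h)]
  ring

lemma Tr_ketbra_mul (x y : FockSpace L) (b : FockSpace L →L[ℂ] FockSpace L) :
    Tr (ketbra x y * b) = ⟪y, b x⟫_ℂ := by
  rw [Tr, ketbra, ← InnerProductSpace.rankOne_def', mul_def, InnerProductSpace.rankOne_comp,
    InnerProductSpace.trace_rankOne, adjoint_inner_left]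

lemma Tr_sum_smul_ketbra_mul {ι : Type*} (s : Finset ι) (c : ι → ℂ) (v : ι → FockSpace L)
    (b : FockSpace L →L[ℂ] FockSpace L) :
    Tr ((∑ i ∈ s, c i • ketbra (v i) (v i)) * b) = ∑ i ∈ s, c i * ⟪v i, b (v i)⟫_ℂ := by
  simp only [Finset.sum_mul, smul_mul_assoc, ← Tr_ketbra_mul, Tr, toLinearMap_sum,
    toLinearMap_smul, map_sum, map_smul, smul_eq_mul]

theorem entangled_state_reduces_second_general
    {L : Type} [Fintype L] [LinearOrder L]
    (I J : Finset L) (ι : L → L)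
    (hinj : Set.InjOn ι (I : Set L)) (himg : I.image ι = J) (hIJ : Disjoint I J)
    (D : Finset L → List L) (hD : IsEnum D)
    (p : Finset L → ℝ)
    (hp0 : ∀ S ∈ I.powerset, 0 ≤ p S) :
    ∀ b ∈ A (I.image ι),
      ⟪Phi D p I ι, b (Phi D p I ι)⟫_ℂ
        = Tr ((∑ S ∈ I.powerset,
            ((p S : ℝ) : ℂ) • ketbra (fvec ((D S).map ι)) (fvec ((D S).map ι))) * b) := by
  intro b hb
  subst himg
  have hDI : ∀ S ∈ I.powerset, ∀ m ∈ D S, m ∈ I := fun S hS m hm =>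
    Finset.mem_powerset.mp hS ((hD S).2 ▸ List.mem_toFinset.mpr hm)
  have hDJ : ∀ S ∈ I.powerset, Disjoint (D S).toFinset (I.image ι) := fun S hS =>
    hIJ.mono_left fun m hm => hDI S hS m (List.mem_toFinset.mp hm)
  have hnodup : ∀ S ∈ I.powerset, ((D S).map ι).Nodup := fun S hS =>
    (hD S).1.map_on fun x hx y hy => hinj (hDI S hS x hx) (hDI S hS y hy)
  have himage : ∀ S ∈ I.powerset, ∀ m ∈ (D S).map ι, m ∈ I.image ι := fun S hS m hm => by
    obtain ⟨x, hx, rfl⟩ := List.mem_map.mp hm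
    exact Finset.mem_image_of_mem ι (hDI S hS x hx)
  rw [Phi, inner_sum_smul_apply_sum_smul _ _ _ _ fun S hS T hT hST =>
      inner_fvec_append_apply_fvec_append_of_toFinset_ne hb (hD S).1 (hD T).1 (hDJ S hS)
        (hDJ T hT) (hnodup S hS) (hnodup T hT) (himage S hS) (himage T hT)
        (by rwa [(hD S).2, (hD T).2]),
    Tr_sum_smul_ketbra_mul]
  refine Finset.sum_congr rfl fun S hS => ?_
  rw [inner_fvec_append_apply_fvec_append hb (hD S).1 (hDJ S hS) (hnodup S hS) (himage S hS),
    Complex.conj_ofReal, ← Complex.ofReal_mul, Real.mul_self_sqrt (hp0 S hS)]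

/-- Let `I ⊆ L` be finite, `ι : I → J` a bijection onto `J ⊆ L` with
`I ∩ J = ∅`, `(p_M)_{M ∈ D_I}` a probability distribution, and set
`Φ = Σ_{M ∈ D_I} p_M^{1/2} f_{M ι(M)}` and `ρ_{ι(I)} = Σ_{M ∈ D_I} p_M |f_{ι(M)}⟩⟨f_{ι(M)}|`.
Then `⟨Φ, bΦ⟩ = Tr(ρ_{ι(I)} b)` for all `b ∈ A(ι(I))`. -/
theorem entangled_state_reduces_second
    {L : Type} [Fintype L] [LinearOrder L]
    (I J : Finset L) (ι : L → L)
    (hinj : Set.InjOn ι (I : Set L)) (himg : I.image ι = J) (hIJ : Disjoint I J)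
    (D : Finset L → List L) (hD : IsEnum D)
    (p : Finset L → ℝ)
    (hp0 : ∀ S ∈ I.powerset, 0 ≤ p S) (hp1 : ∑ S ∈ I.powerset, p S = 1) :
    ∀ b ∈ A (I.image ι),
      ⟪Phi D p I ι, b (Phi D p I ι)⟫_ℂ
        = Tr ((∑ S ∈ I.powerset,
            ((p S : ℝ) : ℂ) • ketbra (fvec ((D S).map ι)) (fvec ((D S).map ι))) * b) :=
  entangled_state_reduces_second_general I J ι hinj himg hIJ D hD p hp0

end Fermion
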